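/- Let q be an odd prime with q ≡ 3 (mod 4), r an odd prime with r mod 2q ∈ D_0^{(2q)}, n = ord_{2q}(r), and η a primitive 2q-th root of unity in 𝔽_{r^n}. Then for all i, j ∈ {0,1}, the reciprocal polynomial of g_{E_i}^{(2q)} equals g_{E_{(i+1) mod 2}}^{(2q)}, and the reciprocal polynomial of g_{D_i}^{(2q)}(x)·g_{E_j}^{(2q)}(x) equals g_{D_{(i+1) mod 2}}^{(2q)}(x)·g_{E_{(j+1) mod 2}}^{(2q)}(x). -/

import Mathlib

open Polynomial

/-- The cyclotomic class `D_i^{(2q)} = {g^(2s+i) mod 2q : 0 ≤ s < (q-1)/2}`. -/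
def Dcl (q g i : ℕ) : Finset ℕ :=
  (Finset.range ((q - 1) / 2)).image fun s => g ^ (2 * s + i) % (2 * q)

/-- The cyclotomic class `E_i^{(2q)} = {2u mod 2q : u ∈ D_i^{(2q)}}`. -/
def Ecl (q g i : ℕ) : Finset ℕ :=
  (Dcl q g i).image fun u => 2 * u % (2 * q)

/-- The `r`-cyclotomic coset modulo `2q` containing `t`: `{t·r^i mod 2q : i ∈ ℕ}`. -/
def Ccoset (q r t : ℕ) : Set ℕ := {x | ∃ i : ℕ, x = t * r ^ i % (2 * q)}

/-- `g_{D_i}^{(2q)}(x) = ∏_{j ∈ D_i^{(2q)}} (x - η^j)`. -/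
noncomputable def gDpoly (F : Type) [Field F] (q g i : ℕ) (η : F) : F[X] :=
  ∏ j ∈ Dcl q g i, (X - C (η ^ j))

/-- `g_{E_i}^{(2q)}(x) = ∏_{j ∈ E_i^{(2q)}} (x - η^j)`. -/
noncomputable def gEpoly (F : Type) [Field F] (q g i : ℕ) (η : F) : F[X] :=
  ∏ j ∈ Ecl q g i, (X - C (η ^ j))

/-- `M_t(x) = ∏_{j ∈ C_{(t,2q)}} (x - η^j)`, the minimal polynomial of `η^t`. -/
noncomputable def Mpoly (F : Type) [Field F] (q r t : ℕ) (η : F) : F[X] :=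
  ∏ᶠ j ∈ Ccoset q r t, (X - C (η ^ j))

/-- The reciprocal polynomial `h̃(x) = h(0)⁻¹ x^{deg h} h(x⁻¹)`. -/
noncomputable def recip (F : Type) [Field F] (h : F[X]) : F[X] :=
  C (h.coeff 0)⁻¹ * h.reverse

/-!
Since `g` has order `q - 1` modulo `2q`, `g ^ ((q - 1) / 2)` is a square root of `1` other than `1`,
hence equals `-1`. As `q ≡ 3 (mod 4)` the exponent `(q - 1) / 2` is odd, so negation modulo `2q`
swaps `D_0` with `D_1` and `E_0` with `E_1`. Taking the reciprocal of `∏ (X - η ^ j)` inverts its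
roots, i.e. negates the exponents `j` modulo `2q`, and it is multiplicative.
-/

section Reciprocal

variable {F : Type} [Field F]

lemma recip_one : recip F 1 = 1 := by
  simpa [recip] using reverse_C (1 : F)

lemma recip_mul (h k : F[X]) : recip F (h * k) = recip F h * recip F k := by
  rw [recip, recip, recip, reverse_mul_of_domain, mul_coeff_zero, mul_inv, C_mul]
  ring

lemma recip_X_sub_C {a : F} (ha : a ≠ 0) : recip F (X - C a) = X - C a⁻¹ := by
  have hrev : (X - C a).reverse = 1 - C a * X := by
    rw [reverse, natDegree_X_sub_C, reflect_sub, reflect_one_X, reflect_C, pow_one]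
  rw [recip, hrev, coeff_sub, coeff_X_zero, coeff_C_zero, zero_sub, mul_sub, mul_one, ← mul_assoc,
    ← C_mul, inv_neg, neg_mul, inv_mul_cancel₀ ha, C_neg, C_neg, C_1]
  ring

noncomputable def recipHom (F : Type) [Field F] : F[X] →* F[X] where
  toFun := recip F
  map_one' := recip_one
  map_mul' := recip_mul

lemma recip_prod {ι : Type*} (s : Finset ι) (f : ι → F[X]) :
    recip F (∏ i ∈ s, f i) = ∏ i ∈ s, recip F (f i) :=
  map_prod (recipHom F) f s

lemma pow_val_neg_mul_pow {N : ℕ} [NeZero N] {η : F} (hη : η ^ N = 1) (x : ℕ) :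
    η ^ (-(x : ZMod N)).val * η ^ x = 1 := by
  obtain ⟨k, hk⟩ : N ∣ (-(x : ZMod N)).val + x := by
    rw [← ZMod.natCast_eq_zero_iff, Nat.cast_add, ZMod.natCast_zmod_val, neg_add_cancel]
  rw [← pow_add, hk, pow_mul, hη, one_pow]

lemma recip_prod_X_sub_C_pow {N : ℕ} [NeZero N] {η : F} (hη : η ^ N = 1) {S T : Finset ℕ}
    (hS : ∀ x ∈ S, x < N ∧ (-(x : ZMod N)).val ∈ T)
    (hT : ∀ x ∈ T, x < N ∧ (-(x : ZMod N)).val ∈ S) :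
    recip F (∏ j ∈ S, (X - C (η ^ j))) = ∏ j ∈ T, (X - C (η ^ j)) := by
  have hη0 : η ≠ 0 := by
    rintro rfl
    simp [zero_pow (NeZero.ne N)] at hη
  have hinvol : ∀ x < N, (-((-(x : ZMod N)).val : ZMod N)).val = x := fun x hx => by
    rw [ZMod.natCast_zmod_val, neg_neg, ZMod.val_natCast_of_lt hx]
  rw [recip_prod]
  refine Finset.prod_nbij' (fun x => (-(x : ZMod N)).val) (fun x => (-(x : ZMod N)).val)
    (fun x hx => (hS x hx).2) (fun x hx => (hT x hx).2)
    (fun x hx => hinvol x (hS x hx).1) (fun x hx => hinvol x (hT x hx).1) fun x _ => ?_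
  rw [recip_X_sub_C (pow_ne_zero x hη0), inv_eq_of_mul_eq_one_left (pow_val_neg_mul_pow hη x)]

end Reciprocal

/-- Via `ZMod (2 * p) ≃ ZMod 2 × ZMod p`: the `ZMod 2` component of a square root of `1` is `1 = -1`,
and `ZMod p` is a field. -/
lemma ZMod.eq_one_or_eq_neg_one_of_sq_eq_one {p : ℕ} [Fact p.Prime] (hp : Odd p)
    {x : ZMod (2 * p)} (hx : x ^ 2 = 1) : x = 1 ∨ x = -1 := by
  set e := ZMod.chineseRemainder (Nat.coprime_two_left.mpr hp)
  have hZMod2 : ∀ a : ZMod 2, a ^ 2 = 1 → a = 1 ∧ a = -1 := by decide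
  have hx' : (e x).1 ^ 2 = 1 ∧ (e x).2 ^ 2 = 1 := by
    simpa [Prod.ext_iff] using congrArg e hx
  obtain ⟨hfst, hfst'⟩ := hZMod2 _ hx'.1
  rcases sq_eq_one_iff.mp hx'.2 with hsnd | hsnd
  · exact .inl (e.injective (Prod.ext (by simpa using hfst) (by simpa using hsnd)))
  · exact .inr (e.injective (Prod.ext (by simpa using hfst') (by simpa using hsnd)))

lemma pow_half_eq_neg_one {q g : ℕ} (hq : q.Prime) (hodd : Odd q)
    (hg : orderOf (g : ZMod (2 * q)) = q - 1) : (g : ZMod (2 * q)) ^ ((q - 1) / 2) = -1 := by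
  have := Fact.mk hq
  have hq2 := hq.two_le
  have hq1 := Nat.odd_iff.mp hodd
  refine (ZMod.eq_one_or_eq_neg_one_of_sq_eq_one hodd ?_).resolve_left fun h => ?_
  · rw [← pow_mul, show (q - 1) / 2 * 2 = q - 1 by omega, ← hg, pow_orderOf_eq_one]
  · have := orderOf_le_of_pow_eq_one (by omega) h
    omega

section Classes

variable {q g i x : ℕ}

lemma lt_of_mem_Dcl (hq : 0 < q) (hx : x ∈ Dcl q g i) : x < 2 * q := by
  obtain ⟨s, -, rfl⟩ := Finset.mem_image.mp hx
  exact Nat.mod_lt _ (by omega)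

lemma lt_of_mem_Ecl (hq : 0 < q) (hx : x ∈ Ecl q g i) : x < 2 * q := by
  obtain ⟨u, -, rfl⟩ := Finset.mem_image.mp hx
  exact Nat.mod_lt _ (by omega)

lemma mem_Dcl_iff (hodd : Odd q) (hq : 1 < q) (hg : orderOf (g : ZMod (2 * q)) = q - 1) :
    x ∈ Dcl q g i ↔ x < 2 * q ∧ ∃ e, e ≡ i [MOD 2] ∧ (x : ZMod (2 * q)) = g ^ e := by
  obtain ⟨k, hk⟩ : 2 ∣ q - 1 := (Nat.Odd.sub_odd hodd odd_one).two_dvd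
  have hk0 : 0 < k := by omega
  have hg1 : (g : ZMod (2 * q)) ^ (2 * k) = 1 := by rw [← hk, ← hg, pow_orderOf_eq_one]
  constructor
  · intro hx
    obtain ⟨s, -, rfl⟩ := Finset.mem_image.mp hx
    exact ⟨lt_of_mem_Dcl (by omega) hx, 2 * s + i, by simp [Nat.ModEq], by simp⟩
  · rintro ⟨hx, e, he, hxe⟩
    set m := (e + i) / 2 + (k * i - i)
    have hm : 2 * m + i = e + 2 * k * i := by
      have : i ≤ k * i := Nat.le_mul_of_pos_left i hk0
      unfold Nat.ModEq at he
      rw [mul_assoc]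
      omega
    have hcast : ((g ^ (2 * (m % k) + i) : ℕ) : ZMod (2 * q)) = x := by
      rw [Nat.cast_pow, hxe]
      refine pow_eq_pow_of_modEq ?_ hg1
      calc 2 * (m % k) + i ≡ 2 * m + i [MOD 2 * k] := ((Nat.mod_modEq m k).mul_left' 2).add_right i
        _ = e + 2 * k * i := hm
        _ ≡ e [MOD 2 * k] := Nat.add_mul_mod_self_left e (2 * k) i
    have hmk := Nat.mod_lt m hk0
    refine Finset.mem_image.mpr ⟨m % k, Finset.mem_range.mpr (by omega), ?_⟩
    rw [← Nat.mod_eq_of_lt hx]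
    exact (ZMod.natCast_eq_natCast_iff' _ _ _).mp hcast

lemma neg_mem_Dcl (hq : q.Prime) (hq4 : q % 4 = 3) (hg : orderOf (g : ZMod (2 * q)) = q - 1)
    {j : ℕ} (hj : j ≡ i + 1 [MOD 2]) (hx : x ∈ Dcl q g i) :
    (-(x : ZMod (2 * q))).val ∈ Dcl q g j := by
  have hodd : Odd q := Nat.odd_iff.mpr (by omega)
  have := NeZero.of_pos (by omega : 0 < 2 * q)
  obtain ⟨-, e, he, hxe⟩ := (mem_Dcl_iff hodd hq.one_lt hg).mp hx
  refine (mem_Dcl_iff hodd hq.one_lt hg).mpr ⟨ZMod.val_lt _, e + (q - 1) / 2, ?_, ?_⟩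
  · unfold Nat.ModEq at *
    omega
  · rw [ZMod.natCast_zmod_val, hxe, pow_add, pow_half_eq_neg_one hq hodd hg, mul_neg_one]

lemma neg_mem_Ecl (hq : q.Prime) (hq4 : q % 4 = 3) (hg : orderOf (g : ZMod (2 * q)) = q - 1)
    {j : ℕ} (hj : j ≡ i + 1 [MOD 2]) (hx : x ∈ Ecl q g i) :
    (-(x : ZMod (2 * q))).val ∈ Ecl q g j := by
  have := NeZero.of_pos (by omega : 0 < 2 * q)
  obtain ⟨u, hu, rfl⟩ := Finset.mem_image.mp hx
  refine Finset.mem_image.mpr ⟨_, neg_mem_Dcl hq hq4 hg hj hu, ?_⟩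
  rw [← ZMod.val_natCast, ZMod.natCast_mod]
  push_cast
  rw [ZMod.natCast_zmod_val, mul_neg]

end Classes

section Factors

variable {F : Type} [Field F] {q g : ℕ}

lemma recip_gDpoly (hq : q.Prime) (hq4 : q % 4 = 3) (hg : orderOf (g : ZMod (2 * q)) = q - 1)
    {η : F} (hη : η ^ (2 * q) = 1) (i : ℕ) :
    recip F (gDpoly F q g i η) = gDpoly F q g ((i + 1) % 2) η := by
  have := NeZero.of_pos (by omega : 0 < 2 * q)
  refine recip_prod_X_sub_C_pow hη (fun x hx => ⟨lt_of_mem_Dcl hq.pos hx, ?_⟩)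
    fun x hx => ⟨lt_of_mem_Dcl hq.pos hx, ?_⟩
  · exact neg_mem_Dcl hq hq4 hg (Nat.mod_modEq _ _) hx
  · exact neg_mem_Dcl hq hq4 hg (by unfold Nat.ModEq; omega) hx

lemma recip_gEpoly (hq : q.Prime) (hq4 : q % 4 = 3) (hg : orderOf (g : ZMod (2 * q)) = q - 1)
    {η : F} (hη : η ^ (2 * q) = 1) (i : ℕ) :
    recip F (gEpoly F q g i η) = gEpoly F q g ((i + 1) % 2) η := by
  have := NeZero.of_pos (by omega : 0 < 2 * q)
  refine recip_prod_X_sub_C_pow hη (fun x hx => ⟨lt_of_mem_Ecl hq.pos hx, ?_⟩)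
    fun x hx => ⟨lt_of_mem_Ecl hq.pos hx, ?_⟩
  · exact neg_mem_Ecl hq hq4 hg (Nat.mod_modEq _ _) hx
  · exact neg_mem_Ecl hq hq4 hg (by unfold Nat.ModEq; omega) hx

end Factors

theorem stmt9_general (q g : ℕ) (hq : q.Prime)
    (hg2q : orderOf ((g : ℕ) : ZMod (2 * q)) = q - 1)
    (hq4 : q % 4 = 3)
    (F : Type) [Field F]
    (η : F) (hη : IsPrimitiveRoot η (2 * q))
    (i j : ℕ) :
    recip F (gEpoly F q g i η) = gEpoly F q g ((i + 1) % 2) η ∧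
    recip F (gDpoly F q g i η * gEpoly F q g j η) =
      gDpoly F q g ((i + 1) % 2) η * gEpoly F q g ((j + 1) % 2) η := by
  refine ⟨recip_gEpoly hq hq4 hg2q hη.pow_eq_one i, ?_⟩
  rw [recip_mul, recip_gDpoly hq hq4 hg2q hη.pow_eq_one, recip_gEpoly hq hq4 hg2q hη.pow_eq_one]

theorem stmt9 (q g : ℕ) (hq : q.Prime) (hodd : Odd q)
    (hgq : orderOf ((g : ℕ) : ZMod q) = q - 1)
    (hg2q : orderOf ((g : ℕ) : ZMod (2 * q)) = q - 1)
    (hq4 : q % 4 = 3)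
    (r : ℕ) (hr : r.Prime) (hrodd : Odd r)
    (hrD : r % (2 * q) ∈ Dcl q g 0)
    (F : Type) [Field F] [Fintype F] [CharP F r]
    (hcard : Fintype.card F = r ^ orderOf ((r : ℕ) : ZMod (2 * q)))
    (η : F) (hη : IsPrimitiveRoot η (2 * q))
    (i j : ℕ) (hi : i ∈ ({0, 1} : Set ℕ)) (hj : j ∈ ({0, 1} : Set ℕ)) :
    recip F (gEpoly F q g i η) = gEpoly F q g ((i + 1) % 2) η ∧
    recip F (gDpoly F q g i η * gEpoly F q g j η) =
      gDpoly F q g ((i + 1) % 2) η * gEpoly F q g ((j + 1) % 2) η :=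
  stmt9_general q g hq hg2q hq4 F η hη i j
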